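/- arXiv:1201.2647 — 6 statements merged into one kernel-verified Lean document; each statement's English description precedes it below -/
import Mathlib

section
/- The set Y of coherent sequences in X is equal to the closure in X of q(ℝ), where q : ℝ → X is the diagonal map q(a) = (q_l(a))_{l≥0}. In particular q(ℝ) ⊆ Y and q(ℝ) is dense in Y. -/
open scoped Real
noncomputable section

/-- `X = ∏_{l≥0} ℝ/r^l ℤ`, with coordinatewise addition and the product topology. -/
abbrev SolX (r : ℕ) := (l : ℕ) → AddCircle ((r : ℝ) ^ l)

/-- The natural homomorphism `ℝ/r^{l+1}ℤ → ℝ/r^l ℤ` induced by the identity on `ℝ`. -/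
def natHom (r l : ℕ) : AddCircle ((r : ℝ) ^ (l + 1)) →+ AddCircle ((r : ℝ) ^ l) :=
  QuotientAddGroup.map _ _ (AddMonoidHom.id ℝ) (by
    intro x hx
    rw [AddSubgroup.mem_comap]
    obtain ⟨k, hk⟩ := AddSubgroup.mem_zmultiples_iff.mp hx
    refine AddSubgroup.mem_zmultiples_iff.mpr ⟨k * (r : ℤ), ?_⟩
    simp only [AddMonoidHom.id_apply, zsmul_eq_mul] at hk ⊢
    rw [← hk]
    push_cast
    ring)

/-- `x ∈ X` is a coherent sequence if `x l` is the image of `x (l+1)` under the natural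
homomorphism, for every `l`. -/
def Coherent (r : ℕ) (x : SolX r) : Prop := ∀ l, natHom r l (x (l + 1)) = x l

/-- The diagonal map `q : ℝ → X`, `q(a) = (a mod r^l ℤ)_{l≥0}`. -/
def qmap (r : ℕ) (a : ℝ) : SolX r := fun _ => (a : AddCircle _)

lemma natHom_coe (r l : ℕ) (a : ℝ) :
    natHom r l ((a : AddCircle ((r : ℝ) ^ (l + 1)))) = (a : AddCircle ((r : ℝ) ^ l)) := rfl

lemma continuous_natHom (r l : ℕ) : Continuous (natHom r l) :=
  ((QuotientAddGroup.isQuotientMap_mk _).continuous_iff).mpr continuous_quot_mk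

lemma coh_lift (r : ℕ) (x : SolX r) (hx : Coherent r x) (N : ℕ) (a : ℝ)
    (ha : (a : AddCircle ((r : ℝ) ^ N)) = x N) :
    ∀ l ≤ N, (a : AddCircle ((r : ℝ) ^ l)) = x l := by
  induction N with
  | zero => intro l hl; interval_cases l; exact ha
  | succ N ih =>
    intro l hl
    rcases Nat.lt_or_ge l (N + 1) with h | h
    · have hN : (a : AddCircle ((r : ℝ) ^ N)) = x N := by
        rw [← hx N, ← ha, natHom_coe]
      exact ih hN l (by omega)
    · have : l = N + 1 := by omega
      subst this; exact ha

/-- `Y` equals the closure of `q(ℝ)` in `X`; in particular `q(ℝ) ⊆ Y` and `q(ℝ)` is dense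
in `Y`. -/
theorem stmt_1 (r : ℕ) (hr : 2 ≤ r) :
    {x : SolX r | Coherent r x} = closure (Set.range (qmap r)) ∧
    Set.range (qmap r) ⊆ {x : SolX r | Coherent r x} ∧
    {x : SolX r | Coherent r x} ⊆ closure (Set.range (qmap r)) := by
  have hsub : Set.range (qmap r) ⊆ {x : SolX r | Coherent r x} := by
    rintro _ ⟨a, rfl⟩ l
    exact natHom_coe r l a
  have hclosed : IsClosed {x : SolX r | Coherent r x} := by
    have : {x : SolX r | Coherent r x} =
        ⋂ l, {x : SolX r | natHom r l (x (l + 1)) = x l} := by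
      ext x; simp [Coherent, Set.mem_iInter]
    rw [this]
    exact isClosed_iInter fun l => isClosed_eq
      ((continuous_natHom r l).comp (continuous_apply (l + 1))) (continuous_apply l)
  have hdense : {x : SolX r | Coherent r x} ⊆ closure (Set.range (qmap r)) := by
    intro x hx
    rw [mem_closure_iff]
    intro s hs hxs
    obtain ⟨I, u, hu, hIs⟩ := isOpen_pi_iff.mp hs x hxs
    set N : ℕ := I.sup id with hN
    obtain ⟨a, ha⟩ := Quotient.exists_rep (x N)
    refine ⟨qmap r a, hIs ?_, ⟨a, rfl⟩⟩
    intro i hi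
    have hiN : i ≤ N := Finset.le_sup (f := id) hi
    have : (a : AddCircle ((r : ℝ) ^ i)) = x i :=
      coh_lift r x hx N a ha i hiN
    simpa [qmap, this] using (hu i hi).2
  refine ⟨Set.Subset.antisymm hdense ?_, hsub, hdense⟩
  rw [← hclosed.closure_eq]
  exact closure_mono hsub
end
end

section
/- If y = (y_l)_{l≥0} is a coherent sequence in X with y_0 = 0 in ℝ/ℤ, then y_l lies in the image of ℤ under the quotient map ℝ → ℝ/r^l ℤ for every l ≥ 0. Consequently, the kernel of the restriction to Y of the coordinate projection π_0 : X → ℝ/ℤ is a totally disconnected subset of X. -/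
open scoped Real
noncomputable section

lemma aux_finite_td {α} [TopologicalSpace α] [T1Space α] {s : Set α} (hs : s.Finite) :
    IsTotallyDisconnected s := by
  haveI := hs.to_subtype
  haveI : DiscreteTopology s := Finite.instDiscreteTopology
  exact totallyDisconnectedSpace_subtype_iff.mp inferInstance

lemma intCoe_eq (r l : ℕ) (m n : ℤ) (h : m % ((r:ℤ)^l) = n % ((r:ℤ)^l)) :
    ((m : ℝ) : AddCircle ((r : ℝ) ^ l)) = ((n : ℝ) : AddCircle ((r : ℝ) ^ l)) := by
  rw [QuotientAddGroup.eq_iff_sub_mem]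
  have hmod : Int.ModEq ((r:ℤ)^l) m n := h
  obtain ⟨k, hk⟩ := hmod.dvd
  refine AddSubgroup.mem_zmultiples_iff.mpr ⟨-k, ?_⟩
  have : (n : ℝ) - m = ((r:ℤ)^l : ℝ) * k := by exact_mod_cast congrArg (Int.cast : ℤ → ℝ) hk
  simp only [zsmul_eq_mul]
  push_cast at this ⊢
  linarith

lemma intSet_finite (r l : ℕ) (hr : 2 ≤ r) :
    (Set.range (fun n : ℤ => ((n : ℝ) : AddCircle ((r : ℝ) ^ l)))).Finite := by
  have hsub : (Set.range (fun n : ℤ => ((n : ℝ) : AddCircle ((r : ℝ) ^ l)))) ⊆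
      (fun n : ℤ => ((n : ℝ) : AddCircle ((r : ℝ) ^ l))) '' (Set.Icc 0 ((r:ℤ) ^ l)) := by
    rintro _ ⟨n, rfl⟩
    have hpos : (0 : ℤ) < (r : ℤ) ^ l := by positivity
    refine ⟨n % ((r:ℤ)^l), ?_, ?_⟩
    · have := Int.emod_lt_of_pos n hpos
      have h0 := Int.emod_nonneg n (ne_of_gt hpos)
      constructor <;> omega
    · exact intCoe_eq r l _ _ (Int.emod_emod_of_dvd n dvd_rfl)
  exact ((Set.finite_Icc _ _).image _).subset hsub

lemma coh_int (r : ℕ) (y : SolX r) (hy : Coherent r y) (h0 : y 0 = 0) :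
    ∀ l, ∃ n : ℤ, y l = ((n : ℝ) : AddCircle ((r : ℝ) ^ l)) := by
  intro l
  induction l with
  | zero => exact ⟨0, by simpa using h0⟩
  | succ l ih =>
    obtain ⟨n, hn⟩ := ih
    obtain ⟨x, hx⟩ := QuotientAddGroup.mk_surjective (y (l + 1))
    have hmap : natHom r l (y (l + 1)) = ((x : ℝ) : AddCircle ((r : ℝ) ^ l)) := by
      rw [← hx]; rfl
    have heq : ((x : ℝ) : AddCircle ((r : ℝ) ^ l)) = ((n : ℝ) : AddCircle ((r : ℝ) ^ l)) := by
      rw [← hmap, hy l, hn]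
    rw [QuotientAddGroup.eq_iff_sub_mem] at heq
    obtain ⟨k, hk⟩ := AddSubgroup.mem_zmultiples_iff.mp heq
    refine ⟨n + k * (r : ℤ) ^ l, ?_⟩
    have hxval : (x : ℝ) = ((n + k * (r : ℤ) ^ l : ℤ) : ℝ) := by
      simp only [zsmul_eq_mul] at hk
      push_cast
      linarith
    rw [← hx, show (QuotientAddGroup.mk x : AddCircle ((r:ℝ)^(l+1))) = ((x : ℝ) : AddCircle ((r:ℝ)^(l+1))) from rfl, hxval]

/-- If `y` is a coherent sequence with `y 0 = 0` in `ℝ/ℤ`, then every coordinate `y l` lies in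
the image of `ℤ` under the quotient map `ℝ → ℝ/r^l ℤ`; consequently, the kernel of the
restriction to `Y` of the coordinate projection `π₀` is totally disconnected. -/
theorem stmt_3 (r : ℕ) (hr : 2 ≤ r) :
    (∀ y : SolX r, Coherent r y → y 0 = 0 →
      ∀ l, ∃ n : ℤ, y l = ((n : ℝ) : AddCircle ((r : ℝ) ^ l))) ∧
    IsTotallyDisconnected {y : SolX r | Coherent r y ∧ y 0 = 0} := by
  refine ⟨fun y hy h0 => coh_int r y hy h0, ?_⟩
  intro t hts ht x hx y hy
  funext l
  have hproj : IsPreconnected ((fun z : SolX r => z l) '' t) :=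
    ht.image _ (continuous_apply l).continuousOn
  have hsub : ((fun z : SolX r => z l) '' t) ⊆
      Set.range (fun n : ℤ => ((n : ℝ) : AddCircle ((r : ℝ) ^ l))) := by
    rintro _ ⟨z, hz, rfl⟩
    obtain ⟨n, hn⟩ := coh_int r z (hts hz).1 (hts hz).2 l
    exact ⟨n, hn.symm⟩
  exact aux_finite_td (intSet_finite r l hr) _ hsub hproj ⟨x, hx, rfl⟩ ⟨y, hy, rfl⟩
end
end

section
/- For all x, y ∈ X₀, regarded as elements of X by taking x_0 = y_0 = 0 in ℝ/ℤ, one has d(x, y) ≤ 2 r^{-1} ρ(x, y). -/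
open scoped Real
noncomputable section

/-- The standard isomorphism `φ_l : ℝ/r^l ℤ → 𝕋 ⊆ ℂ`, `φ_l(a mod r^l ℤ) = exp(2πi r^{-l} a)`,
viewed as a complex-valued function. -/
def phi (r l : ℕ) (x : AddCircle ((r : ℝ) ^ l)) : ℂ := (AddCircle.toCircle x : ℂ)

/-- The `l`-th term `r^{-l} |φ_l(x_l) - φ_l(y_l)|`. -/
def dterm (r : ℕ) (x y : SolX r) (l : ℕ) : ℝ :=
  ((r : ℝ) ^ l)⁻¹ * ‖phi r l (x l) - phi r l (y l)‖

/-- `d(x,y) = max_{l ≥ 0} r^{-l} |φ_l(x_l) - φ_l(y_l)|`. -/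
def dX (r : ℕ) (x y : SolX r) : ℝ := ⨆ l, dterm r x y l

/-- `X₀ = ∏_{l≥1} ℤ/r^l ℤ`; the coordinate indexed by `l : ℕ` here is the factor
`ℤ/r^(l+1) ℤ` (paper index `l+1`).  Each factor carries the discrete topology, and `X₀`
the product topology. -/
abbrev X0 (r : ℕ) := (l : ℕ) → ZMod (r ^ (l + 1))

/-- For `x ≠ y`, the (`0`-based) index of the first coordinate where `x` and `y` differ;
in the paper's (`1`-based) notation this is `l(x,y) - 1`. -/
def firstDiff (r : ℕ) (x y : X0 r) : ℕ := sInf {n | x n ≠ y n}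

open Classical in
/-- `ρ(x,y) = r^{-l(x,y)+1}`, and `ρ(x,x) = 0`. -/
def rho (r : ℕ) (x y : X0 r) : ℝ :=
  if x = y then 0 else ((r : ℝ) ^ firstDiff r x y)⁻¹

/-- The identification of `X₀` with a subset of `X`: the `l = 0` coordinate is `0` in `ℝ/ℤ`,
and for `l ≥ 1` the coordinate `x_l ∈ ℤ/r^l ℤ` is regarded as an element of `ℝ/r^l ℤ`. -/
def emb (r : ℕ) (x : X0 r) : SolX r
  | 0 => 0
  | (l + 1) => (((x l).val : ℝ) : AddCircle ((r : ℝ) ^ (l + 1)))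

section

variable {r : ℕ}

theorem dterm_self (x : SolX r) (l : ℕ) : dterm r x x l = 0 := by
  simp [dterm]

theorem dterm_eq_zero_of_apply_eq {x y : SolX r} {l : ℕ} (h : x l = y l) :
    dterm r x y l = 0 := by
  simp [dterm, h]

theorem dterm_le_two_mul (x y : SolX r) (l : ℕ) : dterm r x y l ≤ 2 * ((r : ℝ) ^ l)⁻¹ := by
  have hphi : ‖phi r l (x l) - phi r l (y l)‖ ≤ 2 := by
    refine (norm_sub_le _ _).trans ?_
    simp only [phi, Circle.norm_coe]
    norm_num
  rw [dterm, mul_comm 2]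
  gcongr

theorem apply_eq_of_lt_firstDiff {x y : X0 r} {n : ℕ} (h : n < firstDiff r x y) : x n = y n :=
  not_not.mp (Nat.notMem_of_lt_sInf h)

theorem emb_apply_eq_of_le_firstDiff {x y : X0 r} {l : ℕ} (h : l ≤ firstDiff r x y) :
    emb r x l = emb r y l := by
  cases l with
  | zero => rfl
  | succ n => simp only [emb, apply_eq_of_lt_firstDiff h]

theorem rho_nonneg (x y : X0 r) : 0 ≤ rho r x y := by
  unfold rho
  split <;> positivity

theorem rho_of_ne {x y : X0 r} (h : x ≠ y) : rho r x y = ((r : ℝ) ^ firstDiff r x y)⁻¹ :=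
  if_neg h

end

/-- For `x, y ∈ X₀`, regarded as elements of `X`, one has `d(x,y) ≤ 2 r⁻¹ ρ(x,y)`. -/
theorem stmt_6 (r : ℕ) (hr : 2 ≤ r) :
    ∀ x y : X0 r, dX r (emb r x) (emb r y) ≤ 2 * (r : ℝ)⁻¹ * rho r x y := by
  intro x y
  have hbound_nonneg : 0 ≤ 2 * (r : ℝ)⁻¹ * rho r x y := by
    have := rho_nonneg x y
    positivity
  refine ciSup_le fun l => ?_
  by_cases hxy : x = y
  · subst hxy
    rwa [dterm_self]
  rcases le_or_gt l (firstDiff r x y) with hl | hl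
  · rwa [dterm_eq_zero_of_apply_eq (emb_apply_eq_of_le_firstDiff hl)]
  calc dterm r (emb r x) (emb r y) l ≤ 2 * ((r : ℝ) ^ l)⁻¹ := dterm_le_two_mul _ _ l
    _ ≤ 2 * ((r : ℝ) ^ (firstDiff r x y + 1))⁻¹ := by
      have hr1 : (1 : ℝ) ≤ r := by exact_mod_cast hr.trans' one_le_two
      gcongr
      exact hl
    _ = 2 * (r : ℝ)⁻¹ * rho r x y := by
      rw [rho_of_ne hxy, pow_succ', mul_inv, mul_assoc]
end
end

section
/- For all x, y ∈ Y₀ (coherent sequences in X₀), regarded as elements of X by taking x_0 = y_0 = 0 in ℝ/ℤ, one has d(x, y) ≥ r^{-1} |exp(2πi r^{-1}) − 1| · ρ(x, y). -/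
open scoped Real
noncomputable section

/-- `x ∈ X₀` is a coherent sequence if `x l` is the image of `x (l+1)` under the natural
ring homomorphism `ℤ/r^{l+2}ℤ → ℤ/r^{l+1}ℤ`, for every `l`. -/
def Coherent0 (r : ℕ) (x : X0 r) : Prop :=
  ∀ l, ZMod.castHom (pow_dvd_pow r (Nat.le_succ (l + 1))) (ZMod (r ^ (l + 1))) (x (l + 1)) = x l


/-!
If `x ≠ y` first differ at level `l` (paper indexing), coherence makes `x_l - y_l` vanish in
`ℤ/r^{l-1}ℤ`, so it equals `r^{l-1} u` with `0 < u < r`. The `l`-th term of `d(x, y)` is then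
`r^{-l} |exp(2πi u/r) - 1|`, and the nontrivial `r`-th roots of unity closest to `1` are
`exp(±2πi/r)`; finally `r^{-l} = r⁻¹ ρ(x, y)`.
-/

open Complex

lemma norm_exp_two_pi_I_mul_div_sub_one (N k : ℕ) :
    ‖exp (2 * π * I * k / N) - 1‖ = 2 * |Real.sin (π * k / N)| := by
  have harg : 2 * π * I * k / N = I * ((2 * π * k / N : ℝ) : ℂ) := by push_cast; ring
  rw [harg, norm_exp_I_mul_ofReal_sub_one, norm_mul, Real.norm_two, Real.norm_eq_abs]
  congr 3
  ring

lemma Real.sin_pi_div_le_sin_pi_mul_div {N k : ℕ} (hk : 0 < k) (hkN : k < N) :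
    Real.sin (π / N) ≤ Real.sin (π * k / N) := by
  have hN : (0 : ℝ) < N := by exact_mod_cast hk.trans hkN
  have hk1 : (1 : ℝ) ≤ k := by exact_mod_cast hk
  have hkN1 : (k : ℝ) ≤ N - 1 := by
    have : (k : ℝ) + 1 ≤ N := by exact_mod_cast hkN
    linarith
  have hmem : ∀ t : ℝ, 0 ≤ t → t ≤ N → π * t / N ∈ Set.Icc 0 π := fun t ht htN =>
    ⟨by positivity, by rw [div_le_iff₀ hN]; nlinarith [Real.pi_pos]⟩
  -- `sin` is concave on `[0, π]` and takes the same value at both ends of `[π/N, π - π/N]`.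
  have hsegment : π * k / N ∈ segment ℝ (π * 1 / N) (π * (N - 1) / N) := by
    rw [segment_eq_Icc (by gcongr; linarith)]
    exact ⟨by gcongr, by gcongr⟩
  have hmin := strictConcaveOn_sin_Icc.concaveOn.ge_on_segment
    (hmem 1 zero_le_one (by linarith)) (hmem (N - 1) (by linarith) (by linarith)) hsegment
  have hsym : π * (N - 1) / N = π - π * 1 / N := by field_simp
  rwa [hsym, Real.sin_pi_sub, min_self, mul_one] at hmin

lemma norm_exp_two_pi_I_div_sub_one_le {N k : ℕ} (hk : 0 < k) (hkN : k < N) :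
    ‖exp (2 * π * I / N) - 1‖ ≤ ‖exp (2 * π * I * k / N) - 1‖ := by
  have h := Real.sin_pi_div_le_sin_pi_mul_div hk hkN
  have hpos : 0 ≤ Real.sin (π / N) := Real.sin_nonneg_of_nonneg_of_le_pi (by positivity)
    (div_le_self Real.pi_pos.le (by exact_mod_cast hk.trans hkN))
  calc ‖exp (2 * π * I / N) - 1‖ = ‖exp (2 * π * I * (1 : ℕ) / N) - 1‖ := by
        rw [Nat.cast_one, mul_one]
    _ = 2 * |Real.sin (π * (1 : ℕ) / N)| := norm_exp_two_pi_I_mul_div_sub_one N 1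
    _ ≤ 2 * |Real.sin (π * k / N)| := by
        rw [Nat.cast_one, mul_one, abs_of_nonneg hpos, abs_of_nonneg (hpos.trans h)]
        gcongr
    _ = ‖exp (2 * π * I * k / N) - 1‖ := (norm_exp_two_pi_I_mul_div_sub_one N k).symm

lemma ZMod.norm_exp_two_pi_I_div_sub_one_le_toCircle {r n : ℕ} [NeZero r]
    {d : ZMod (r ^ (n + 1))} (hd : d ≠ 0) (hdvd : r ^ n ∣ d.val) :
    ‖exp (2 * π * I / r) - 1‖ ≤ ‖(ZMod.toCircle d : ℂ) - 1‖ := by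
  obtain ⟨k, hk⟩ := hdvd
  have hk0 : 0 < k := by
    refine Nat.pos_of_ne_zero fun hk0 => hd ?_
    rw [← ZMod.val_eq_zero, hk, hk0, mul_zero]
  have hkr : k < r := by
    have hlt := ZMod.val_lt d
    rw [hk, pow_succ] at hlt
    exact Nat.lt_of_mul_lt_mul_left hlt
  have hcircle : (ZMod.toCircle d : ℂ) = exp (2 * π * I * k / r) := by
    have hr : (r : ℂ) ≠ 0 := NeZero.ne _
    rw [ZMod.toCircle_apply, hk]
    push_cast
    congr 1
    field_simp
    ring
  rw [hcircle]
  exact norm_exp_two_pi_I_div_sub_one_le hk0 hkr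

section

variable {r : ℕ}

lemma eq_of_lt_firstDiff {x y : X0 r} {m : ℕ} (h : m < firstDiff r x y) : x m = y m :=
  not_not.mp (Nat.notMem_of_lt_sInf h)

lemma ne_at_firstDiff {x y : X0 r} (h : x ≠ y) : x (firstDiff r x y) ≠ y (firstDiff r x y) :=
  Nat.sInf_mem (Function.ne_iff.mp h)

lemma Coherent0.pow_firstDiff_dvd_val_sub [NeZero r] {x y : X0 r} (hx : Coherent0 r x)
    (hy : Coherent0 r y) :
    r ^ firstDiff r x y ∣ (x (firstDiff r x y) - y (firstDiff r x y)).val := by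
  rcases hn : firstDiff r x y with _ | m
  · simp
  have hxy : x m = y m := eq_of_lt_firstDiff (by omega)
  have hcast : ((x (m + 1) - y (m + 1)).val : ZMod (r ^ (m + 1))) = 0 := by
    rw [ZMod.natCast_val, ← ZMod.castHom_apply (h := pow_dvd_pow r (Nat.le_succ (m + 1))),
      map_sub, hx m, hy m, hxy, sub_self]
  exact (ZMod.natCast_eq_zero_iff _ _).mp hcast

lemma phi_emb_succ [NeZero r] (x : X0 r) (l : ℕ) :
    phi r (l + 1) (emb r x (l + 1)) = ZMod.toCircle (x l) := by
  rw [phi, emb, AddCircle.toCircle_apply_mk, ZMod.toCircle_eq_circleExp]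
  push_cast
  ring_nf

lemma dterm_emb_succ [NeZero r] (x y : X0 r) (l : ℕ) :
    dterm r (emb r x) (emb r y) (l + 1) =
      ((r : ℝ) ^ (l + 1))⁻¹ * ‖(ZMod.toCircle (x l - y l) : ℂ) - 1‖ := by
  rw [dterm, phi_emb_succ, phi_emb_succ, AddChar.map_sub_eq_div, Circle.coe_div,
    div_sub_one (Circle.coe_ne_zero _), norm_div, Circle.norm_coe, div_one]

lemma dX_nonneg (x y : SolX r) : 0 ≤ dX r x y :=
  Real.iSup_nonneg fun l => by unfold dterm; positivity

lemma dterm_le_two [NeZero r] (x y : SolX r) (l : ℕ) : dterm r x y l ≤ 2 := by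
  have hinv : ((r : ℝ) ^ l)⁻¹ ≤ 1 :=
    inv_le_one_of_one_le₀ (one_le_pow₀ (by exact_mod_cast NeZero.one_le))
  have hnorm : ‖phi r l (x l) - phi r l (y l)‖ ≤ 2 := by
    calc ‖phi r l (x l) - phi r l (y l)‖ ≤ ‖phi r l (x l)‖ + ‖phi r l (y l)‖ := norm_sub_le _ _
      _ = 2 := by rw [phi, phi, Circle.norm_coe, Circle.norm_coe]; norm_num
  simpa [dterm] using mul_le_mul hinv hnorm (norm_nonneg _) zero_le_one

lemma dterm_le_dX [NeZero r] (x y : SolX r) (l : ℕ) : dterm r x y l ≤ dX r x y :=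
  le_ciSup ⟨2, by rintro _ ⟨l, rfl⟩; exact dterm_le_two x y l⟩ l

end

/-- For coherent `x, y ∈ Y₀`, regarded as elements of `X`, one has
`d(x,y) ≥ r⁻¹ |exp(2πi r⁻¹) - 1| ρ(x,y)`. -/
theorem stmt_7 (r : ℕ) (hr : 2 ≤ r) :
    ∀ x y : X0 r, Coherent0 r x → Coherent0 r y →
      (r : ℝ)⁻¹ * ‖Complex.exp (2 * (Real.pi : ℂ) * Complex.I * (r : ℂ)⁻¹) - 1‖ *
          rho r x y ≤ dX r (emb r x) (emb r y) := by
  intro x y hx hy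
  have : NeZero r := ⟨by omega⟩
  by_cases hxy : x = y
  · rw [rho, if_pos hxy, mul_zero]
    exact dX_nonneg _ _
  set n := firstDiff r x y
  have hd : x n - y n ≠ 0 := sub_ne_zero.mpr (ne_at_firstDiff hxy)
  calc (r : ℝ)⁻¹ * ‖exp (2 * π * I * (r : ℂ)⁻¹) - 1‖ * rho r x y
      = ((r : ℝ) ^ (n + 1))⁻¹ * ‖exp (2 * π * I / r) - 1‖ := by
        rw [rho, if_neg hxy, pow_succ, mul_inv, div_eq_mul_inv]
        ring
    _ ≤ ((r : ℝ) ^ (n + 1))⁻¹ * ‖(ZMod.toCircle (x n - y n) : ℂ) - 1‖ := by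
        gcongr
        exact ZMod.norm_exp_two_pi_I_div_sub_one_le_toCircle hd (hx.pow_firstDiff_dvd_val_sub hy)
    _ = dterm r (emb r x) (emb r y) (n + 1) := (dterm_emb_succ x y n).symm
    _ ≤ dX r (emb r x) (emb r y) := dterm_le_dX _ _ _
end
end

section
/- With respect to the restriction of the ultrametric ρ to Y₀, the one-dimensional Hausdorff measure H¹ satisfies H¹(Y_n) = 1/R_n for every n ≥ 0 (where Y_0 = Y₀ and Y_n = {x ∈ Y₀ : x_n = 0 in ℤ/R_n ℤ} for n ≥ 1). Consequently the normalized Haar measure μ₀ on Y₀ (with μ₀(Y₀) = 1) coincides with one-dimensional Hausdorff measure on the Borel subsets of Y₀. -/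
/-! The cylinders `{x | x n = a}` are the balls of `ρ`: they have diameter at most `1/R_{n+1}`,
and a set of diameter `< 1/R_n` lies in a single cylinder of level `n`. The `R_{n+1}` cylinders
of level `n` are translates of one another, so every translation-invariant probability measure
gives each of them mass `1/R_{n+1}`. Covering `Y₀` by the cylinders of one level gives
`H¹(Y₀) ≤ 1`; conversely the cylinder masses force `μ₀ s ≤ diam s` for the normalized Haar
measure `μ₀`, hence `μ₀ ≤ H¹`. So `H¹` is a finite invariant measure on the compact metrizable
group `Y₀` of total mass `1`, and uniqueness of Haar measure identifies it, and every invariant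
probability measure, with `μ₀`. -/

open scoped Real
noncomputable section

/-- The partial products `R_0 = 1`, `R_l = r_1 r_2 ⋯ r_l`, for a sequence `r` of integers
(indexed here so that `r j` is the paper's `r_{j+1}`). -/
def RR (r : ℕ → ℕ) (l : ℕ) : ℕ := ∏ j ∈ Finset.range l, r j
/-- `R_l` divides `R_{l+1}`. -/
lemma RR_dvd (r : ℕ → ℕ) (l : ℕ) : RR r l ∣ RR r (l + 1) :=
  ⟨r l, Finset.prod_range_succ r l⟩

/-- `X₀ = ∏_{l≥1} ℤ/R_l ℤ`; the coordinate indexed by `l : ℕ` here is the factor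
`ℤ/R_{l+1} ℤ` (paper index `l+1`).  Each factor is discrete and `X₀` carries the product
topology. -/
abbrev X0R (r : ℕ → ℕ) := (l : ℕ) → ZMod (RR r (l + 1))

/-- `x ∈ X₀` is a coherent sequence if `x l` is the image of `x (l+1)` under the natural
homomorphism `ℤ/R_{l+2}ℤ → ℤ/R_{l+1}ℤ`, for every `l`. -/
def Coherent0R (r : ℕ → ℕ) (x : X0R r) : Prop :=
  ∀ l, ZMod.castHom (RR_dvd r (l + 1)) (ZMod (RR r (l + 1))) (x (l + 1)) = x l

/-- `Y₀`, the set of coherent sequences, as an additive subgroup of `X₀`; it is a compact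
abelian topological group. -/
def Y0RSub (r : ℕ → ℕ) : AddSubgroup (X0R r) where
  carrier := {x | Coherent0R r x}
  zero_mem' := fun l => by simp
  add_mem' := fun hx hy l => by
    simp only [Pi.add_apply, map_add]
    rw [hx l, hy l]
  neg_mem' := fun hx l => by
    simp only [Pi.neg_apply, map_neg]
    rw [hx l]

/-- For `x ≠ y`, the (`0`-based) index of the first coordinate where `x` and `y` differ;
in the paper's (`1`-based) notation this is `l(x,y) - 1`. -/
def firstDiffR (r : ℕ → ℕ) (x y : X0R r) : ℕ := sInf {n | x n ≠ y n}

open Classical in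
/-- The ultrametric `ρ(x,y) = 1/R_{l(x,y)-1}`, with `ρ(x,x) = 0`. -/
def rhoR (r : ℕ → ℕ) (x y : X0R r) : ℝ :=
  if x = y then 0 else ((RR r (firstDiffR r x y) : ℝ))⁻¹

lemma RR_pos (r : ℕ → ℕ) (hr0 : ∀ j, 0 < r j) (l : ℕ) : 0 < RR r l :=
  Finset.prod_pos fun j _ => hr0 j

lemma RR_mono (r : ℕ → ℕ) (hr0 : ∀ j, 0 < r j) : Monotone (RR r) :=
  monotone_nat_of_le_succ fun l => by
    show (∏ j ∈ Finset.range l, r j) ≤ ∏ j ∈ Finset.range (l + 1), r j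
    rw [Finset.prod_range_succ]
    exact Nat.le_mul_of_pos_right _ (hr0 l)

lemma rhoR_nonneg (r : ℕ → ℕ) (x y : X0R r) : 0 ≤ rhoR r x y := by
  unfold rhoR
  split
  · exact le_refl 0
  · exact inv_nonneg.mpr (Nat.cast_nonneg _)

lemma firstDiffR_comm (r : ℕ → ℕ) (x y : X0R r) : firstDiffR r x y = firstDiffR r y x := by
  unfold firstDiffR
  congr 1
  ext n
  exact ne_comm

lemma rhoR_comm (r : ℕ → ℕ) (x y : X0R r) : rhoR r x y = rhoR r y x := by
  unfold rhoR
  rcases eq_or_ne x y with rfl | h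
  · simp
  · rw [if_neg h, if_neg h.symm, firstDiffR_comm]

lemma rhoR_ultra (r : ℕ → ℕ) (hr0 : ∀ j, 0 < r j) (x y z : X0R r) :
    rhoR r x z ≤ max (rhoR r x y) (rhoR r y z) := by
  rcases eq_or_ne x z with rfl | hxz
  · rw [rhoR, if_pos rfl]
    exact le_max_of_le_left (rhoR_nonneg r x y)
  rcases eq_or_ne x y with rfl | hxy
  · exact le_max_of_le_right le_rfl
  rcases eq_or_ne y z with rfl | hyz
  · exact le_max_of_le_left le_rfl
  have hmin : min (firstDiffR r x y) (firstDiffR r y z) ≤ firstDiffR r x z := by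
    by_contra hlt
    push_neg at hlt
    have h1 : firstDiffR r x z < firstDiffR r x y := lt_of_lt_of_le hlt (min_le_left _ _)
    have h2 : firstDiffR r x z < firstDiffR r y z := lt_of_lt_of_le hlt (min_le_right _ _)
    have hmem : x (firstDiffR r x z) ≠ z (firstDiffR r x z) := by
      have hne : {n | x n ≠ z n}.Nonempty := Function.ne_iff.mp hxz
      exact Nat.sInf_mem hne
    have hxy' : x (firstDiffR r x z) = y (firstDiffR r x z) := by
      have := Nat.notMem_of_lt_sInf h1
      simpa [firstDiffR] using this
    have hyz' : y (firstDiffR r x z) = z (firstDiffR r x z) := by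
      have := Nat.notMem_of_lt_sInf h2
      simpa [firstDiffR] using this
    exact hmem (hxy'.trans hyz')
  rw [rhoR, if_neg hxz]
  rcases le_total (firstDiffR r x y) (firstDiffR r y z) with hle | hle
  · apply le_max_of_le_left
    rw [rhoR, if_neg hxy]
    apply inv_anti₀
    · exact_mod_cast RR_pos r hr0 _
    · have : firstDiffR r x y ≤ firstDiffR r x z := min_eq_left hle ▸ hmin
      exact_mod_cast RR_mono r hr0 this
  · apply le_max_of_le_right
    rw [rhoR, if_neg hyz]
    apply inv_anti₀
    · exact_mod_cast RR_pos r hr0 _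
    · have : firstDiffR r y z ≤ firstDiffR r x z := min_eq_right hle ▸ hmin
      exact_mod_cast RR_mono r hr0 this

/-- The ultrametric `ρ`, as a metric space structure on `X₀`. -/
def metricX0R (r : ℕ → ℕ) (hr0 : ∀ j, 0 < r j) : MetricSpace (X0R r) where
  dist := rhoR r
  dist_self x := by
    show rhoR r x x = 0
    rw [rhoR, if_pos rfl]
  dist_comm := rhoR_comm r
  dist_triangle x y z :=
    le_trans (rhoR_ultra r hr0 x y z)
      (max_le_add_of_nonneg (rhoR_nonneg r x y) (rhoR_nonneg r y z))
  eq_of_dist_eq_zero := by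
    intro x y h
    by_contra hne
    have h' : rhoR r x y = 0 := h
    rw [rhoR, if_neg hne] at h'
    have hpos : (0 : ℝ) < ((RR r (firstDiffR r x y) : ℝ))⁻¹ := by
      apply inv_pos.mpr
      exact_mod_cast RR_pos r hr0 _
    exact hpos.ne' h'

/-- `Y₀` as a bare type (so that it can be equipped with the metric `ρ` below). -/
def Y0M (r : ℕ → ℕ) : Type := {x : X0R r // Coherent0R r x}

/-- The inclusion `Y₀ → X₀`. -/
def Y0Mval (r : ℕ → ℕ) : Y0M r → X0R r := Subtype.val

lemma Y0Mval_injective (r : ℕ → ℕ) : Function.Injective (Y0Mval r) :=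
  Subtype.val_injective

/-- Addition on `Y₀` (coordinatewise; `Y₀` is a subgroup of `X₀`). -/
def Y0Madd (r : ℕ → ℕ) (g y : Y0M r) : Y0M r :=
  ⟨g.1 + y.1, (Y0RSub r).add_mem g.2 y.2⟩

open MeasureTheory Set Filter Topology Metric
open scoped ENNReal

lemma rhoR_congr {r : ℕ → ℕ} {x y x' y' : X0R r} (h : ∀ l, x' l = y' l ↔ x l = y l) :
    rhoR r x' y' = rhoR r x y := by
  have hne : {l | x' l ≠ y' l} = {l | x l ≠ y l} := by simp only [ne_eq, h]
  have heq : x' = y' ↔ x = y := by simp only [funext_iff, h]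
  simp only [rhoR, firstDiffR, hne]
  split_ifs <;> simp_all

lemma RR_dvd_of_le (r : ℕ → ℕ) {m n : ℕ} (h : m ≤ n) : RR r m ∣ RR r n :=
  Finset.prod_dvd_prod_of_subset _ _ r (Finset.range_subset_range.2 h)

lemma RR_strictMono {r : ℕ → ℕ} (hr : ∀ j, 1 < r j) : StrictMono (RR r) :=
  strictMono_nat_of_lt_succ fun l => by
    rw [show RR r (l + 1) = RR r l * r l from Finset.prod_range_succ r l]
    exact lt_mul_right (RR_pos r (fun j => zero_lt_one.trans (hr j)) l) (hr l)

lemma tendsto_inv_RR {r : ℕ → ℕ} (hr : ∀ j, 1 < r j) :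
    Tendsto (fun n => (RR r n : ℝ≥0∞)⁻¹) atTop (𝓝 0) :=
  ENNReal.tendsto_inv_nat_nhds_zero.comp (RR_strictMono hr).tendsto_atTop

lemma exists_inv_RR_succ_lt_le {r : ℕ → ℕ} (hr : ∀ j, 1 < r j) {ε : ℝ≥0∞} (h0 : ε ≠ 0)
    (h1 : ε ≤ 1) :
    ∃ n, (RR r (n + 1) : ℝ≥0∞)⁻¹ < ε ∧ ε ≤ (RR r n : ℝ≥0∞)⁻¹ := by
  have hex : ∃ n, (RR r (n + 1) : ℝ≥0∞)⁻¹ < ε :=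
    (((tendsto_inv_RR hr).comp (tendsto_add_atTop_nat 1)).eventually
      (gt_mem_nhds (pos_iff_ne_zero.2 h0))).exists
  refine ⟨Nat.find hex, Nat.find_spec hex, ?_⟩
  cases hn : Nat.find hex with
  | zero => simpa [RR] using h1
  | succ m => exact not_lt.1 (Nat.find_min hex (hn ▸ m.lt_succ_self))

namespace Y0M

variable {r : ℕ → ℕ}

lemma cast_apply_of_le (x : Y0M r) {m n : ℕ} (h : m ≤ n) :
    ZMod.castHom (RR_dvd_of_le r (Nat.succ_le_succ h)) (ZMod (RR r (m + 1))) (x.1 n) = x.1 m := by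
  induction n, h using Nat.le_induction with
  | base => simp
  | succ n hmn ih =>
    rw [← ZMod.castHom_comp (RR_dvd_of_le r (Nat.succ_le_succ hmn)) (RR_dvd r (n + 1)),
      RingHom.comp_apply, x.2 n, ih]

lemma apply_eq_of_le {x y : Y0M r} {m n : ℕ} (h : m ≤ n) (hxy : x.1 n = y.1 n) :
    x.1 m = y.1 m := by
  rw [← cast_apply_of_le x h, ← cast_apply_of_le y h, hxy]

lemma lt_firstDiffR_iff {x y : Y0M r} (hxy : x ≠ y) (n : ℕ) :
    n < firstDiffR r x.1 y.1 ↔ x.1 n = y.1 n := by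
  refine ⟨fun h => not_not.1 (Nat.notMem_of_lt_sInf h), fun h => ?_⟩
  by_contra! hle
  exact Nat.sInf_mem (Function.ne_iff.1 (Subtype.coe_ne_coe.2 hxy)) (apply_eq_of_le hle h)

instance : AddCommGroup (Y0M r) := inferInstanceAs (AddCommGroup (Y0RSub r))

@[simp]
lemma add_apply (x y : Y0M r) (n : ℕ) : (x + y).1 n = x.1 n + y.1 n := rfl

/-- `cyl n 0` is the paper's `Y_{n+1}`. -/
def cyl (n : ℕ) (a : ZMod (RR r (n + 1))) : Set (Y0M r) := {x | x.1 n = a}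

lemma iUnion_cyl (n : ℕ) : ⋃ a, cyl n a = (univ : Set (Y0M r)) :=
  eq_univ_of_forall fun x => mem_iUnion.2 ⟨x.1 n, rfl⟩

lemma pairwise_disjoint_cyl (n : ℕ) :
    Pairwise (Function.onFun Disjoint (cyl n : ZMod (RR r (n + 1)) → Set (Y0M r))) :=
  fun _ _ hab => disjoint_left.2 fun _ hxa hxb => hab (hxa.symm.trans hxb)

lemma preimage_add_cyl (g : Y0M r) (n : ℕ) (a : ZMod (RR r (n + 1))) :
    (g + ·) ⁻¹' cyl n a = cyl n (a - g.1 n) := by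
  ext y
  simp only [cyl, mem_preimage, mem_ofPred_eq, add_apply, eq_sub_iff_add_eq, add_comm]

variable [hr : Fact (∀ j, 1 < r j)]

instance (l : ℕ) : NeZero (RR r l) := ⟨(RR_pos r (fun j => zero_lt_one.trans (hr.out j)) l).ne'⟩

lemma exists_apply_eq (n : ℕ) (a : ZMod (RR r (n + 1))) : ∃ x : Y0M r, x.1 n = a :=
  ⟨⟨fun l => (a.val : ZMod (RR r (l + 1))), fun _ => map_natCast _ _⟩, ZMod.natCast_zmod_val a⟩

instance : MetricSpace (Y0M r) :=
  MetricSpace.induced (Y0Mval r) (Y0Mval_injective r)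
    (metricX0R r fun j => zero_lt_one.trans (hr.out j))

instance : MeasurableSpace (Y0M r) := borel _

instance : BorelSpace (Y0M r) := ⟨rfl⟩

lemma edist_eq_of_ne {x y : Y0M r} (hxy : x ≠ y) :
    edist x y = (RR r (firstDiffR r x.1 y.1) : ℝ≥0∞)⁻¹ := by
  rw [edist_dist, show dist x y = rhoR r x.1 y.1 from rfl, rhoR,
    if_neg (Subtype.coe_ne_coe.2 hxy), ENNReal.ofReal_inv_of_pos (by simp [NeZero.pos]),
    ENNReal.ofReal_natCast]

lemma edist_lt_inv_RR_iff (x y : Y0M r) (n : ℕ) :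
    edist x y < (RR r n : ℝ≥0∞)⁻¹ ↔ x.1 n = y.1 n := by
  rcases eq_or_ne x y with rfl | hxy
  · simp
  rw [edist_eq_of_ne hxy, ENNReal.inv_lt_inv, Nat.cast_lt, (RR_strictMono hr.out).lt_iff_lt,
    lt_firstDiffR_iff hxy]

lemma edist_le_inv_RR_succ_iff (x y : Y0M r) (n : ℕ) :
    edist x y ≤ (RR r (n + 1) : ℝ≥0∞)⁻¹ ↔ x.1 n = y.1 n := by
  rcases eq_or_ne x y with rfl | hxy
  · simp
  rw [edist_eq_of_ne hxy, ENNReal.inv_le_inv, Nat.cast_le, (RR_strictMono hr.out).le_iff_le,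
    Nat.succ_le_iff, lt_firstDiffR_iff hxy]

lemma eball_eq_cyl (x : Y0M r) (n : ℕ) : eball x (RR r n : ℝ≥0∞)⁻¹ = cyl n (x.1 n) :=
  ext fun y => edist_lt_inv_RR_iff y x n

lemma isOpen_cyl (n : ℕ) (a : ZMod (RR r (n + 1))) : IsOpen (cyl n a) :=
  EMetric.isOpen_iff.2 fun x (hx : x.1 n = a) =>
    ⟨_, ENNReal.inv_pos.2 (ENNReal.natCast_ne_top _), (eball_eq_cyl x n).trans_subset (by rw [hx])⟩

lemma ediam_cyl_le (n : ℕ) (a : ZMod (RR r (n + 1))) :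
    ediam (cyl n a) ≤ (RR r (n + 1) : ℝ≥0∞)⁻¹ :=
  ediam_le fun x (hx : x.1 n = a) y (hy : y.1 n = a) =>
    (edist_le_inv_RR_succ_iff x y n).2 (hx.trans hy.symm)

lemma subset_cyl_of_ediam_lt {s : Set (Y0M r)} {x : Y0M r} (hx : x ∈ s) {n : ℕ}
    (hs : ediam s < (RR r n : ℝ≥0∞)⁻¹) : s ⊆ cyl n (x.1 n) := fun y hy =>
  (edist_lt_inv_RR_iff y x n).1 ((edist_le_ediam_of_mem hy hx).trans_lt hs)

instance : IsIsometricVAdd (Y0M r) (Y0M r) :=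
  ⟨fun g => Isometry.of_dist_eq fun _ _ => rhoR_congr fun l => add_right_inj (g.1 l)⟩

lemma edist_add_left (g x y : Y0M r) : edist (g + x) (g + y) = edist x y :=
  edist_vadd_left g x y

lemma isometry_neg : Isometry fun x : Y0M r => -x :=
  Isometry.of_dist_eq fun _ _ => rhoR_congr fun _ => neg_inj

lemma lipschitzWith_add : LipschitzWith 2 fun p : Y0M r × Y0M r => p.1 + p.2 := fun p q =>
  calc edist (p.1 + p.2) (q.1 + q.2)
      ≤ edist (p.1 + p.2) (p.1 + q.2) + edist (p.1 + q.2) (q.1 + q.2) := edist_triangle _ _ _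
    _ = edist p.2 q.2 + edist p.1 q.1 := by
        rw [edist_add_left, add_comm p.1, add_comm q.1, edist_add_left]
    _ ≤ 2 * edist p q := by
        rw [Prod.edist_eq, two_mul, add_comm]
        exact add_le_add (le_max_left _ _) (le_max_right _ _)

instance : IsTopologicalAddGroup (Y0M r) where
  continuous_add := lipschitzWith_add.continuous
  continuous_neg := isometry_neg.continuous

lemma totallyBounded_univ : TotallyBounded (univ : Set (Y0M r)) := by
  refine EMetric.totallyBounded_iff.2 fun ε hε => ?_
  obtain ⟨n, hn⟩ := ((tendsto_inv_RR hr.out).eventually (gt_mem_nhds hε)).exists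
  choose x hx using exists_apply_eq (r := r) n
  refine ⟨range x, finite_range x, fun y _ => mem_iUnion₂.2 ⟨x (y.1 n), mem_range_self _, ?_⟩⟩
  exact ((edist_lt_inv_RR_iff y _ n).2 (hx _).symm).trans hn

/-- A Cauchy sequence is eventually constant in each coordinate; the limit collects these
eventual values. -/
instance : CompleteSpace (Y0M r) := by
  refine EMetric.complete_of_cauchySeq_tendsto fun u hu => ?_
  have hstable : ∀ n, ∃ N, ∀ k ≥ N, (u k).1 n = (u N).1 n := fun n =>
    (EMetric.cauchySeq_iff'.1 hu _ (ENNReal.inv_pos.2 (ENNReal.natCast_ne_top (RR r n)))).imp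
      fun N hN k hk => (edist_lt_inv_RR_iff _ _ n).1 (hN k hk)
  choose N hN using hstable
  let x : Y0M r := ⟨fun n => (u (N n)).1 n, fun l => by
    have h := (u (max (N l) (N (l + 1)))).2 l
    rwa [hN l _ (le_max_left _ _), hN (l + 1) _ (le_max_right _ _)] at h⟩
  refine ⟨x, EMetric.tendsto_atTop.2 fun ε hε => ?_⟩
  obtain ⟨n, hn⟩ := ((tendsto_inv_RR hr.out).eventually (gt_mem_nhds hε)).exists
  exact ⟨N n, fun k hk => ((edist_lt_inv_RR_iff _ x n).2 (hN n k hk)).trans hn⟩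

instance : CompactSpace (Y0M r) :=
  ⟨isCompact_iff_totallyBounded_isComplete.2 ⟨totallyBounded_univ, isComplete_univ⟩⟩

lemma measure_cyl (μ : Measure (Y0M r)) [IsProbabilityMeasure μ] [μ.IsAddLeftInvariant]
    (n : ℕ) (a : ZMod (RR r (n + 1))) : μ (cyl n a) = (RR r (n + 1) : ℝ≥0∞)⁻¹ := by
  have hconst : ∀ b, μ (cyl n b) = μ (cyl n a) := fun b => by
    obtain ⟨g, hg⟩ := exists_apply_eq n (a - b)
    calc μ (cyl n b) = μ ((g + ·) ⁻¹' cyl n a) := by rw [preimage_add_cyl, hg, sub_sub_cancel]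
      _ = μ (cyl n a) := measure_preimage_add μ g _
  have hsum := measure_iUnion (μ := μ) (pairwise_disjoint_cyl n)
    fun b => (isOpen_cyl n b).measurableSet
  rw [iUnion_cyl, measure_univ, tsum_fintype, Finset.sum_congr rfl fun b _ => hconst b,
    Finset.sum_const, Finset.card_univ, ZMod.card, nsmul_eq_mul, mul_comm] at hsum
  exact ENNReal.eq_inv_of_mul_eq_one_left hsum.symm

lemma measure_le_ediam (μ : Measure (Y0M r)) [IsProbabilityMeasure μ] [μ.IsAddLeftInvariant]
    (s : Set (Y0M r)) : μ s ≤ ediam s := by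
  by_contra! hlt
  have hpos : μ s ≠ 0 := (zero_le.trans_lt hlt).ne'
  obtain ⟨x, hx⟩ := nonempty_of_measure_ne_zero hpos
  obtain ⟨n, hn, hle⟩ := exists_inv_RR_succ_lt_le hr.out hpos prob_le_one
  have hcyl := measure_mono (μ := μ) (subset_cyl_of_ediam_lt hx (hlt.trans_le hle))
  exact lt_irrefl _ (hn.trans_le (hcyl.trans_eq (measure_cyl μ n _)))

def haar : Measure (Y0M r) := Measure.addHaarMeasure ⊤

instance : (haar : Measure (Y0M r)).IsAddHaarMeasure := Measure.isAddHaarMeasure_addHaarMeasure _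

instance : IsProbabilityMeasure (haar : Measure (Y0M r)) :=
  ⟨by rw [haar, ← TopologicalSpace.PositiveCompacts.coe_top]; exact Measure.addHaarMeasure_self⟩

lemma eq_smul_haar (μ : Measure (Y0M r)) [IsFiniteMeasure μ] [μ.IsAddLeftInvariant] :
    μ = μ univ • haar := by
  obtain ⟨c, hc⟩ : ∃ c : NNReal, μ = c • haar := ⟨_, Measure.isAddLeftInvariant_eq_smul μ haar⟩
  rw [hc]
  simp

lemma hausdorffMeasure_univ_le_one : μH[1] (univ : Set (Y0M r)) ≤ 1 := by
  refine (Measure.hausdorffMeasure_le_liminf_sum 1 univ _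
    ((tendsto_inv_RR hr.out).comp (tendsto_add_atTop_nat 1)) (fun n a => cyl n a)
    (Eventually.of_forall ediam_cyl_le) (Eventually.of_forall fun n => (iUnion_cyl n).ge)).trans
    (liminf_le_of_frequently_le' (Frequently.of_forall fun n => ?_))
  calc ∑ a, ediam (cyl n a) ^ (1 : ℝ) ≤ ∑ _a : ZMod (RR r (n + 1)), (RR r (n + 1) : ℝ≥0∞)⁻¹ :=
        Finset.sum_le_sum fun a _ => by rw [ENNReal.rpow_one]; exact ediam_cyl_le n a
    _ = 1 := by
        rw [Finset.sum_const, Finset.card_univ, ZMod.card, nsmul_eq_mul,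
          ENNReal.mul_inv_cancel (Nat.cast_ne_zero.2 (NeZero.ne _)) (ENNReal.natCast_ne_top _)]

lemma hausdorffMeasure_eq_haar : (μH[1] : Measure (Y0M r)) = haar := by
  have hle : haar ≤ (μH[1] : Measure (Y0M r)) :=
    Measure.le_hausdorffMeasure 1 haar 1 one_pos fun s _ => by
      rw [ENNReal.rpow_one]; exact measure_le_ediam haar s
  have huniv : μH[1] (univ : Set (Y0M r)) = 1 :=
    le_antisymm hausdorffMeasure_univ_le_one (by simpa using hle univ)
  have : IsFiniteMeasure (μH[1] : Measure (Y0M r)) := ⟨by simp [huniv]⟩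
  rw [eq_smul_haar μH[1], huniv, one_smul]

end Y0M

open MeasureTheory in
/-- With respect to the restriction of `ρ` to `Y₀`, the one-dimensional Hausdorff measure
satisfies `H¹(Y_n) = 1/R_n` for all `n ≥ 0` (`Y_0 = Y₀`, and `Y_n = {x ∈ Y₀ : x_n = 0}` for
`n ≥ 1`); consequently, any translation-invariant Borel probability measure `μ₀` on `Y₀`
(so, the normalized Haar measure) coincides with `H¹` on the Borel sets. -/
theorem stmt_15 (r : ℕ → ℕ) (hr : ∀ j, 2 ≤ r j) :
    letI : MetricSpace (Y0M r) :=
      MetricSpace.induced (Y0Mval r) (Y0Mval_injective r)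
        (metricX0R r fun j => lt_of_lt_of_le two_pos (hr j))
    letI : MeasurableSpace (Y0M r) := borel _
    haveI : BorelSpace (Y0M r) := ⟨rfl⟩
    (μH[1] (Set.univ : Set (Y0M r)) = 1) ∧
    (∀ n : ℕ, μH[1] {x : Y0M r | Y0Mval r x n = 0} = ((RR r (n + 1) : ENNReal))⁻¹) ∧
    (∀ μ₀ : Measure (Y0M r), μ₀ Set.univ = 1 →
      (∀ g : Y0M r, ∀ E : Set (Y0M r),
        MeasurableSet E → μ₀ ((fun y => Y0Madd r g y) ⁻¹' E) = μ₀ E) →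
      ∀ E : Set (Y0M r), MeasurableSet E → μ₀ E = μH[1] E) := by
  have : Fact (∀ j, 1 < r j) := ⟨hr⟩
  refine ⟨by rw [Y0M.hausdorffMeasure_eq_haar, measure_univ], fun n => ?_,
    fun μ₀ h1 hinv E _ => ?_⟩
  · rw [Y0M.hausdorffMeasure_eq_haar]
    exact Y0M.measure_cyl _ n 0
  · have : IsProbabilityMeasure μ₀ := ⟨h1⟩
    have : μ₀.IsAddLeftInvariant := (forall_measure_preimage_add_iff μ₀).1 hinv
    rw [Y0M.eq_smul_haar μ₀, h1, one_smul, Y0M.hausdorffMeasure_eq_haar]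
end
end

section
/- Every character on Y factors through a coordinate projection: if χ : Y → 𝕋 is a continuous homomorphism from Y into the multiplicative group of complex numbers of modulus 1, then there exist l ≥ 0 and a continuous homomorphism ψ : ℝ/r^l ℤ → 𝕋 such that χ = ψ ∘ π_l on Y. -/
open scoped Real
noncomputable section

/-- `Y`, the set of coherent sequences, as an additive subgroup of `X`. -/
def YSub (r : ℕ) : AddSubgroup (SolX r) where
  carrier := {x | Coherent r x}
  zero_mem' := fun l => by simp
  add_mem' := fun hx hy l => by
    simp only [Pi.add_apply, map_add]
    rw [hx l, hy l]
  neg_mem' := fun hx l => by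
    simp only [Pi.neg_apply, map_neg]
    rw [hx l]

/-!
By continuity `Re χ > 0` on a neighbourhood of `0` in `Y`, and every neighbourhood of `0` contains
`Y ∩ ker π_l` for `l` large, because a coherent sequence vanishing at level `l` vanishes at all
lower levels. The circle has no small subgroups (a unit complex number all of whose powers have
positive real part is `1`), so `χ` is trivial on `Y ∩ ker π_l`. The diagonal map `ℝ → Y` meets
every fibre of `π_l`, and `χ` composed with it is a character of `ℝ` trivial on `r^l ℤ`; it
descends to the required `ψ` on `ℝ/r^l ℤ`.
-/

open Topology

theorem Complex.eq_one_of_forall_re_pow_pos {z : ℂ} (hz : ‖z‖ = 1)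
    (h : ∀ n : ℕ, 0 < (z ^ n).re) : z = 1 := by
  set θ := z.arg
  have hz_exp : z = Complex.exp (θ * Complex.I) := by
    simpa [hz] using (Complex.norm_mul_exp_arg_mul_I z).symm
  have hre : ∀ n : ℕ, (z ^ n).re = Real.cos (n * |θ|) := fun n => by
    rw [hz_exp, ← Complex.exp_nat_mul,
      show (n : ℂ) * (θ * Complex.I) = ((n * θ : ℝ) : ℂ) * Complex.I by push_cast; ring,
      Complex.exp_ofReal_mul_I_re, ← Real.cos_abs, abs_mul, Nat.abs_cast]
  suffices hθ : θ = 0 by rw [hz_exp, hθ]; simp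
  by_contra hθ
  have hθ_pos : 0 < |θ| := abs_pos.mpr hθ
  set n := ⌈π / 2 / |θ|⌉₊
  have h_lower : π / 2 ≤ n * |θ| := (div_le_iff₀ hθ_pos).mp (Nat.le_ceil _)
  have h_upper : n * |θ| ≤ π + π / 2 := by
    have hn : (n : ℝ) < π / 2 / |θ| + 1 := Nat.ceil_lt_add_one (by positivity)
    have := (mul_lt_mul_iff_left₀ hθ_pos).mpr hn
    rw [add_mul, div_mul_cancel₀ _ hθ_pos.ne', one_mul] at this
    linarith [Complex.abs_arg_le_pi z]
  exact (h n).not_ge (hre n ▸ Real.cos_nonpos_of_pi_div_two_le_of_le h_lower h_upper)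

theorem exists_forall_le_eq_imp_mem_of_mem_nhds {E : ℕ → Type*} [∀ n, TopologicalSpace (E n)]
    {x : ∀ n, E n} {U : Set (∀ n, E n)} (hU : U ∈ 𝓝 x) :
    ∃ l, ∀ y, (∀ i ≤ l, y i = x i) → y ∈ U := by
  rw [nhds_pi, Filter.mem_pi'] at hU
  obtain ⟨I, t, ht, hIt⟩ := hU
  refine ⟨I.sup id, fun y hy => hIt fun i hi => ?_⟩
  rw [hy i (Finset.le_sup (f := id) hi)]
  exact mem_of_mem_nhds (ht i)

theorem Coherent.eq_zero_of_le {r : ℕ} {x : SolX r} (hx : Coherent r x) {i l : ℕ} (hil : i ≤ l)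
    (hl : x l = 0) : x i = 0 := by
  induction l, hil using Nat.le_induction with
  | base => exact hl
  | succ m _ ih => exact ih (by rw [← hx m, hl, map_zero])

namespace YSub

theorem exists_forall_eq_zero_imp_mem_of_mem_nhds_zero {r : ℕ} {U : Set (YSub r)}
    (hU : U ∈ 𝓝 0) : ∃ l, ∀ y : YSub r, (y : SolX r) l = 0 → y ∈ U := by
  obtain ⟨V, hV, hVU⟩ := (mem_nhds_subtype _ _ _).mp hU
  obtain ⟨l, hl⟩ := exists_forall_le_eq_imp_mem_of_mem_nhds hV
  exact ⟨l, fun y hy => hVU (hl y fun i hi => y.2.eq_zero_of_le hi hy)⟩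

def ofReal (r : ℕ) : ℝ →+ YSub r where
  toFun u := ⟨fun l => (u : AddCircle ((r : ℝ) ^ l)), fun _ => rfl⟩
  map_zero' := rfl
  map_add' _ _ := rfl

@[simp]
theorem ofReal_apply (r : ℕ) (u : ℝ) (l : ℕ) :
    (ofReal r u : SolX r) l = (u : AddCircle ((r : ℝ) ^ l)) := rfl

theorem continuous_ofReal (r : ℕ) : Continuous (ofReal r) :=
  (continuous_pi fun _ => AddCircle.continuous_mk' _).subtype_mk _

end YSub

namespace AddChar

theorem eq_one_of_forall_re_nsmul_pos {A : Type*} [AddMonoid A] (χ : AddChar A ℂ) {a : A}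
    (ha : ‖χ a‖ = 1) (h : ∀ n : ℕ, 0 < (χ (n • a)).re) : χ a = 1 :=
  Complex.eq_one_of_forall_re_pow_pos ha fun n => χ.map_nsmul_eq_pow n a ▸ h n

section liftAddCircle

variable {M : Type*} [CommMonoid M] {p : ℝ} (φ : AddChar ℝ M) (hφ : φ p = 1)

def liftAddCircle : AddChar (AddCircle p) M :=
  toAddMonoidHomEquiv.symm <| QuotientAddGroup.lift _ φ.toAddMonoidHom <|
    AddSubgroup.zmultiples_le.mpr hφ

theorem continuous_liftAddCircle [TopologicalSpace M] (hφc : Continuous φ) :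
    Continuous (φ.liftAddCircle hφ) :=
  (QuotientAddGroup.isQuotientMap_mk _).continuous_iff.mpr hφc

end liftAddCircle

end AddChar

theorem stmt_17_general (r : ℕ) (χ : YSub r → ℂ) (hχcont : Continuous χ)
    (hχabs : ∀ y, ‖χ y‖ = 1)
    (hχmul : ∀ y z : YSub r, χ (y + z) = χ y * χ z) :
    ∃ (l : ℕ) (ψ : AddCircle ((r : ℝ) ^ l) → ℂ), Continuous ψ ∧
      (∀ u, ‖ψ u‖ = 1) ∧
      (∀ u v, ψ (u + v) = ψ u * ψ v) ∧
      ∀ y : YSub r, χ y = ψ ((y : SolX r) l) := by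
  have hχ0 : χ 0 = 1 := by
    have hne : χ 0 ≠ 0 := norm_ne_zero_iff.mp (by simp [hχabs])
    exact mul_left_cancel₀ hne (by rw [← hχmul, add_zero, mul_one])
  let χ' : AddChar (YSub r) ℂ := ⟨χ, hχ0, hχmul⟩
  obtain ⟨l, hl⟩ := YSub.exists_forall_eq_zero_imp_mem_of_mem_nhds_zero <|
    ((isOpen_lt continuous_const Complex.continuous_re).preimage hχcont).mem_nhds
      (show 0 < (χ 0).re by simp [hχ0])
  have hker : ∀ y : YSub r, (y : SolX r) l = 0 → χ y = 1 := fun y hy =>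
    χ'.eq_one_of_forall_re_nsmul_pos (hχabs y) fun n => hl (n • y) (by simp [hy])
  let φ := χ'.compAddMonoidHom (YSub.ofReal r)
  have hφ : φ ((r : ℝ) ^ l) = 1 := hker _ (by simp)
  refine ⟨l, φ.liftAddCircle hφ,
    φ.continuous_liftAddCircle hφ (hχcont.comp (YSub.continuous_ofReal r)),
    fun u => QuotientAddGroup.induction_on u fun _ => hχabs _, AddChar.map_add_eq_mul _,
    fun y => ?_⟩
  obtain ⟨u, hu⟩ := QuotientAddGroup.mk_surjective ((y : SolX r) l)
  have hy : χ (y - YSub.ofReal r u) = 1 := hker _ (by simp [hu])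
  calc χ y = χ (y - YSub.ofReal r u) * χ (YSub.ofReal r u) := by rw [← hχmul, sub_add_cancel]
    _ = φ.liftAddCircle hφ ((y : SolX r) l) := by rw [hy, one_mul, ← hu]; rfl

/-- Every character on `Y` factors through a coordinate projection: if `χ : Y → 𝕋 ⊆ ℂ` is a
continuous homomorphism into the unit circle, then there are `l ≥ 0` and a continuous
homomorphism `ψ : ℝ/r^l ℤ → 𝕋 ⊆ ℂ` such that `χ = ψ ∘ π_l` on `Y`. -/
theorem stmt_17 (r : ℕ) (hr : 2 ≤ r) (χ : YSub r → ℂ) (hχcont : Continuous χ)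
    (hχabs : ∀ y, ‖χ y‖ = 1)
    (hχmul : ∀ y z : YSub r, χ (y + z) = χ y * χ z) :
    ∃ (l : ℕ) (ψ : AddCircle ((r : ℝ) ^ l) → ℂ), Continuous ψ ∧
      (∀ u, ‖ψ u‖ = 1) ∧
      (∀ u v, ψ (u + v) = ψ u * ψ v) ∧
      ∀ y : YSub r, χ y = ψ ((y : SolX r) l) :=
  stmt_17_general r χ hχcont hχabs hχmul
end
end
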